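/- arXiv:1906.07470 — 2 statements merged into one kernel-verified Lean document; each statement's English description precedes it below -/
import Mathlib

section
/- Let A ∈ ℝ^{m×n}, let L = slt(A Aᵀ) + (1/ω) diag(A Aᵀ) for a parameter ω ≠ 0, and assume L is invertible. Let R be the m×m reverse identity matrix and define L̃ = slt((RA)(RA)ᵀ) + (1/ω) diag((RA)(RA)ᵀ). Then L̃ = R Lᵀ R, and consequently the up-sweep iteration matrix G̃ = I − (RA)ᵀ L̃^{-1} (RA) equals the transpose of the down-sweep iteration matrix G = I − Aᵀ L^{-1} A, i.e., G̃ = Gᵀ. -/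
open Matrix

/-- The reverse identity (anti-diagonal permutation) matrix. -/
def revId (n : ℕ) : Matrix (Fin n) (Fin n) ℝ :=
  Matrix.of fun i j => if j = i.rev then 1 else 0

/-- Strictly lower triangular part of a square matrix. -/
def slt {n : ℕ} (M : Matrix (Fin n) (Fin n) ℝ) : Matrix (Fin n) (Fin n) ℝ :=
  Matrix.of fun i j => if j < i then M i j else 0

/-- The diagonal part of a square matrix. -/
def diagPart {n : ℕ} (M : Matrix (Fin n) (Fin n) ℝ) : Matrix (Fin n) (Fin n) ℝ :=
  Matrix.diagonal fun i => M i i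

/-!
Conjugating by the reversal `R` turns a matrix into `M.submatrix rev rev`, and reversal flips
the order of indices, so the strictly lower part of `R B R` is the reversed strictly upper part of
`B`, i.e. `R (slt Bᵀ)ᵀ R`. For the symmetric Gram matrix `B = A Aᵀ` this gives `L̃ = R Lᵀ R`, and
then `R² = 1`, `Rᵀ = R` turn `I - (RA)ᵀ L̃⁻¹ (RA)` into `I - Aᵀ (L⁻¹)ᵀ A`.
-/

section Reversal

variable {n : ℕ} {κ : Type*}

lemma revId_eq_toMatrix : revId n = (Fin.revPerm : Equiv.Perm (Fin n)).toPEquiv.toMatrix := by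
  ext i j
  simp [revId, PEquiv.toMatrix_apply, eq_comm]

lemma revId_mul [Fintype κ] (M : Matrix (Fin n) κ ℝ) : revId n * M = M.submatrix Fin.rev id := by
  rw [revId_eq_toMatrix, PEquiv.toMatrix_toPEquiv_mul]
  rfl

lemma mul_revId [Fintype κ] (M : Matrix κ (Fin n) ℝ) : M * revId n = M.submatrix id Fin.rev := by
  rw [revId_eq_toMatrix, PEquiv.mul_toMatrix_toPEquiv, Fin.revPerm_symm]
  rfl

lemma revId_mul_mul_revId (M : Matrix (Fin n) (Fin n) ℝ) :
    revId n * M * revId n = M.submatrix Fin.rev Fin.rev := by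
  rw [mul_revId, revId_mul, submatrix_submatrix]
  rfl

lemma revId_mul_revId_mul [Fintype κ] (M : Matrix (Fin n) κ ℝ) : revId n * (revId n * M) = M := by
  rw [revId_mul, revId_mul, submatrix_submatrix, Fin.rev_involutive.comp_self, Function.comp_id,
    submatrix_id_id]

lemma revId_mul_revId : revId n * revId n = 1 := by
  simpa using revId_mul_revId_mul (1 : Matrix (Fin n) (Fin n) ℝ)

lemma transpose_revId : (revId n)ᵀ = revId n := by
  rw [revId_eq_toMatrix, ← PEquiv.toMatrix_symm, ← Equiv.toPEquiv_symm, Fin.revPerm_symm]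

lemma inv_revId_mul_mul_revId (M : Matrix (Fin n) (Fin n) ℝ) :
    (revId n * M * revId n)⁻¹ = revId n * M⁻¹ * revId n := by
  rw [Matrix.mul_inv_rev, Matrix.mul_inv_rev, inv_eq_left_inv revId_mul_revId, Matrix.mul_assoc]

end Reversal

section Splitting

variable {n : ℕ}

lemma slt_revId_mul_mul_revId (M : Matrix (Fin n) (Fin n) ℝ) :
    slt (revId n * M * revId n) = revId n * (slt Mᵀ)ᵀ * revId n := by
  ext i j
  simp [revId_mul_mul_revId, slt, Fin.rev_lt_rev]

lemma diagPart_revId_mul_mul_revId (M : Matrix (Fin n) (Fin n) ℝ) :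
    diagPart (revId n * M * revId n) = revId n * diagPart M * revId n := by
  ext i j
  simp [revId_mul_mul_revId, diagPart, diagonal_apply]

lemma transpose_diagPart (M : Matrix (Fin n) (Fin n) ℝ) : (diagPart M)ᵀ = diagPart M :=
  diagonal_transpose _

lemma slt_add_smul_diagPart_revId_mul_mul_revId {M : Matrix (Fin n) (Fin n) ℝ} (hM : M.IsSymm)
    (c : ℝ) :
    slt (revId n * M * revId n) + c • diagPart (revId n * M * revId n) =
      revId n * (slt M + c • diagPart M)ᵀ * revId n := by
  rw [slt_revId_mul_mul_revId, diagPart_revId_mul_mul_revId, hM.eq, transpose_add, transpose_smul,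
    transpose_diagPart, Matrix.mul_add, Matrix.add_mul, Matrix.mul_smul, Matrix.smul_mul]

end Splitting

theorem upSweep_iteration_matrix_is_transpose_general {m n : ℕ}
    (A : Matrix (Fin m) (Fin n) ℝ) (ω : ℝ)
    (L Ltilde : Matrix (Fin m) (Fin m) ℝ)
    (hLdef : L = slt (A * Aᵀ) + ω⁻¹ • diagPart (A * Aᵀ))
    (hLtdef : Ltilde = slt ((revId m * A) * (revId m * A)ᵀ) +
      ω⁻¹ • diagPart ((revId m * A) * (revId m * A)ᵀ)) :
    Ltilde = revId m * Lᵀ * revId m ∧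
    (1 : Matrix (Fin n) (Fin n) ℝ) - (revId m * A)ᵀ * Ltilde⁻¹ * (revId m * A) =
      ((1 : Matrix (Fin n) (Fin n) ℝ) - Aᵀ * L⁻¹ * A)ᵀ := by
  have hGram : (revId m * A) * (revId m * A)ᵀ = revId m * (A * Aᵀ) * revId m := by
    rw [transpose_mul, transpose_revId, Matrix.mul_assoc, Matrix.mul_assoc, Matrix.mul_assoc]
  have hGramSymm : (A * Aᵀ).IsSymm := by
    rw [IsSymm, transpose_mul, transpose_transpose]
  have hLtilde : Ltilde = revId m * Lᵀ * revId m := by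
    rw [hLtdef, hGram, slt_add_smul_diagPart_revId_mul_mul_revId hGramSymm, hLdef]
  refine ⟨hLtilde, ?_⟩
  rw [hLtilde, inv_revId_mul_mul_revId, ← transpose_nonsing_inv, transpose_mul, transpose_revId,
    transpose_sub, transpose_one, transpose_mul, transpose_mul, transpose_transpose]
  simp only [Matrix.mul_assoc, revId_mul_revId_mul]

theorem upSweep_iteration_matrix_is_transpose {m n : ℕ}
    (A : Matrix (Fin m) (Fin n) ℝ) (ω : ℝ) (hω : ω ≠ 0)
    (L Ltilde : Matrix (Fin m) (Fin m) ℝ)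
    (hLdef : L = slt (A * Aᵀ) + ω⁻¹ • diagPart (A * Aᵀ))
    (hL : IsUnit L)
    (hLtdef : Ltilde = slt ((revId m * A) * (revId m * A)ᵀ) +
      ω⁻¹ • diagPart ((revId m * A) * (revId m * A)ᵀ)) :
    Ltilde = revId m * Lᵀ * revId m ∧
    (1 : Matrix (Fin n) (Fin n) ℝ) - (revId m * A)ᵀ * Ltilde⁻¹ * (revId m * A) =
      ((1 : Matrix (Fin n) (Fin n) ℝ) - Aᵀ * L⁻¹ * A)ᵀ :=
  upSweep_iteration_matrix_is_transpose_general A ω L Ltilde hLdef hLtdef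
end

section
/- Under the assumptions of Proposition 3.1—G diagonalizable with a unique dominant simple eigenvalue λ₁ with |λ₂| < |λ₁| < 1, right eigenvector v₁, left eigenvector ṽ₁ linearly independent of v₁ (nonnormal eigenvalue), and initial errors e₀, ẽ₀ with nonzero dominant components d₁, d̃₁ respectively—the gauge g_k = ‖G^k e₀ − (Gᵀ)^k ẽ₀‖ satisfies g_k / |λ₁|^k → ‖d₁ v₁ − d̃₁ ṽ₁‖ > 0, and hence g_k / ‖G^k e₀‖ → ‖d₁ v₁ − d̃₁ ṽ₁‖ / (|d₁| ‖v₁‖), a finite positive constant: the error gauge is asymptotically proportional to the true error norm. -/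
/-!
Expanding the initial errors in the two eigenbases, `λ₁⁻ᵏ e_k = ∑ᵢ (λᵢ/λ₁)ᵏ dᵢ vᵢ → d₁ v₁` because
every other eigenvalue is strictly smaller in modulus; likewise `λ₁⁻ᵏ ẽ_k → d̃₁ ṽ₁`. Taking norms of
the difference gives the limit of `g_k / |λ₁|ᵏ`, which is positive since `v₁, ṽ₁` are independent
and `d₁ ≠ 0`; dividing by the limit `|d₁| ‖v₁‖` of `‖e_k‖ / |λ₁|ᵏ` gives the last claim.
-/

open Filter Matrix Topology

theorem Antitone.apply_lt_apply_zero {α : Type*} [LinearOrder α] {n : ℕ} {f : Fin n → α}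
    (hf : Antitone f) (h1 : 1 < n) (hgap : f ⟨1, h1⟩ < f ⟨0, by omega⟩) :
    ∀ i ≠ (⟨0, by omega⟩ : Fin n), f i < f ⟨0, by omega⟩ := by
  intro i hi
  have : (⟨1, h1⟩ : Fin n) ≤ i := by
    rw [Fin.le_def]
    exact Nat.one_le_iff_ne_zero.mpr fun h => hi (Fin.ext h)
  exact (hf this).trans_lt hgap

theorem smul_sub_smul_ne_zero {K V : Type*} [Field K] [AddCommGroup V] [Module K V] {x y : V}
    (h : LinearIndependent K ![x, y]) {a : K} (ha : a ≠ 0) (b : K) : a • x - b • y ≠ 0 := by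
  intro hab
  refine ha (LinearIndependent.pair_iff.mp h a (-b) ?_).1
  rwa [neg_smul, ← sub_eq_add_neg]

namespace Matrix

variable {m R : Type*} [Fintype m] [DecidableEq m] [CommSemiring R]

theorem pow_mulVec_of_mulVec_eq_smul {M : Matrix m m R} {a : R} {w : m → R}
    (h : M *ᵥ w = a • w) (k : ℕ) : (M ^ k) *ᵥ w = a ^ k • w := by
  induction k with
  | zero => simp
  | succ k ih => rw [pow_succ, ← mulVec_mulVec, h, mulVec_smul, ih, smul_smul, pow_succ']

theorem pow_mulVec_sum_smul_of_eigen {ι : Type*} [Fintype ι] {M : Matrix m m R} {μ : ι → R}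
    {u : ι → m → R} (heig : ∀ i, M *ᵥ u i = μ i • u i) (c : ι → R) (k : ℕ) :
    (M ^ k) *ᵥ ∑ i, c i • u i = ∑ i, (μ i ^ k * c i) • u i := by
  simp only [mulVec_sum, mulVec_smul, pow_mulVec_of_mulVec_eq_smul (heig _), smul_smul, mul_comm]

end Matrix

section Dominant

variable {𝕜 E ι : Type*} [NormedField 𝕜] [NormedAddCommGroup E] [NormedSpace 𝕜 E] [Fintype ι]

theorem tendsto_inv_pow_smul_sum_of_dominant {μ : ι → 𝕜} {u : ι → E} {i₀ : ι} (hμ : μ i₀ ≠ 0)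
    (hdom : ∀ i ≠ i₀, ‖μ i‖ < ‖μ i₀‖) (c : ι → 𝕜) :
    Tendsto (fun k : ℕ => (μ i₀ ^ k)⁻¹ • ∑ i, (μ i ^ k * c i) • u i) atTop (𝓝 (c i₀ • u i₀)) := by
  have hratio : ∀ k : ℕ, (μ i₀ ^ k)⁻¹ • ∑ i, (μ i ^ k * c i) • u i
      = ∑ i, ((μ i / μ i₀) ^ k * c i) • u i := by
    intro k
    simp only [Finset.smul_sum, smul_smul, div_pow]
    exact Finset.sum_congr rfl fun i _ => by ring_nf
  classical
  simp_rw [hratio]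
  rw [← Fintype.sum_ite_eq' i₀ fun i => c i • u i]
  refine tendsto_finsetSum _ fun i _ => ?_
  split_ifs with h
  · subst h
    simp [div_self hμ]
  · have hlt : ‖μ i / μ i₀‖ < 1 := by
      rw [norm_div, div_lt_one ((norm_nonneg _).trans_lt (hdom i h))]
      exact hdom i h
    simpa using ((tendsto_pow_atTop_nhds_zero_of_norm_lt_one hlt).mul_const (c i)).smul_const (u i)

theorem tendsto_norm_div_pow_of_tendsto_inv_pow_smul {a : 𝕜} {x : ℕ → E} {L : E}
    (h : Tendsto (fun k => (a ^ k)⁻¹ • x k) atTop (𝓝 L)) :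
    Tendsto (fun k => ‖x k‖ / ‖a‖ ^ k) atTop (𝓝 ‖L‖) :=
  h.norm.congr fun k => by rw [norm_smul, norm_inv, norm_pow, inv_mul_eq_div]

end Dominant

theorem Matrix.tendsto_inv_pow_smul_pow_mulVec_of_dominant {𝕜 m ι : Type*} [NormedField 𝕜]
    [Fintype m] [DecidableEq m] [Fintype ι] {M : Matrix m m 𝕜} {μ : ι → 𝕜} {u : ι → m → 𝕜}
    (heig : ∀ i, M *ᵥ u i = μ i • u i) {i₀ : ι} (hμ : μ i₀ ≠ 0)
    (hdom : ∀ i ≠ i₀, ‖μ i‖ < ‖μ i₀‖) (c : ι → 𝕜) :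
    Tendsto (fun k : ℕ => (μ i₀ ^ k)⁻¹ • (M ^ k) *ᵥ ∑ i, c i • u i) atTop (𝓝 (c i₀ • u i₀)) := by
  simp_rw [pow_mulVec_sum_smul_of_eigen heig]
  exact tendsto_inv_pow_smul_sum_of_dominant hμ hdom c

theorem error_gauge_asymptotically_proportional {n : ℕ} (hn : 2 ≤ n)
    (G : Matrix (Fin n) (Fin n) ℂ)
    (μ : Fin n → ℂ)
    (v vt : Module.Basis (Fin n) ℂ (Fin n → ℂ))
    -- right eigenvectors of G:
    (heig : ∀ i, G.mulVec (v i) = μ i • v i)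
    -- left eigenvectors of G, i.e. right eigenvectors of Gᵀ, same eigenvalues:
    (heigT : ∀ i, Gᵀ.mulVec (vt i) = μ i • vt i)
    (hsorted : ∀ i j : Fin n, i ≤ j → ‖μ j‖ ≤ ‖μ i‖)
    (hgap : ‖μ ⟨1, by omega⟩‖ < ‖μ ⟨0, by omega⟩‖)
    -- nonnormality of the dominant eigenvalue:
    (hindep : LinearIndependent ℂ ![(v ⟨0, by omega⟩ : Fin n → ℂ), (vt ⟨0, by omega⟩ : Fin n → ℂ)])
    (e₀ et₀ : Fin n → ℂ) (d dt : Fin n → ℂ)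
    (hdecomp : e₀ = ∑ i, d i • (v i : Fin n → ℂ))
    (hdecompT : et₀ = ∑ i, dt i • (vt i : Fin n → ℂ))
    (hd1 : d ⟨0, by omega⟩ ≠ 0) :
    Tendsto (fun k => ‖(G ^ k).mulVec e₀ - (Gᵀ ^ k).mulVec et₀‖ / ‖μ ⟨0, by omega⟩‖ ^ k)
      atTop
      (nhds ‖d ⟨0, by omega⟩ • (v ⟨0, by omega⟩ : Fin n → ℂ) -
              dt ⟨0, by omega⟩ • (vt ⟨0, by omega⟩ : Fin n → ℂ)‖) ∧
    0 < ‖d ⟨0, by omega⟩ • (v ⟨0, by omega⟩ : Fin n → ℂ) -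
          dt ⟨0, by omega⟩ • (vt ⟨0, by omega⟩ : Fin n → ℂ)‖ ∧
    Tendsto (fun k => ‖(G ^ k).mulVec e₀ - (Gᵀ ^ k).mulVec et₀‖ / ‖(G ^ k).mulVec e₀‖)
      atTop
      (nhds (‖d ⟨0, by omega⟩ • (v ⟨0, by omega⟩ : Fin n → ℂ) -
               dt ⟨0, by omega⟩ • (vt ⟨0, by omega⟩ : Fin n → ℂ)‖ /
             (‖d ⟨0, by omega⟩‖ * ‖(v ⟨0, by omega⟩ : Fin n → ℂ)‖))) := by
  subst hdecomp hdecompT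
  have hdom := Antitone.apply_lt_apply_zero (f := fun i => ‖μ i‖) hsorted (by omega) hgap
  have hμ : μ ⟨0, by omega⟩ ≠ 0 := norm_pos_iff.mp ((norm_nonneg _).trans_lt hgap)
  have he := tendsto_inv_pow_smul_pow_mulVec_of_dominant (u := fun i => v i) heig hμ hdom d
  have het := tendsto_inv_pow_smul_pow_mulVec_of_dominant (u := fun i => vt i) heigT hμ hdom dt
  have hgauge := tendsto_norm_div_pow_of_tendsto_inv_pow_smul
    ((he.sub het).congr fun k => (smul_sub _ _ _).symm)
  have herr := tendsto_norm_div_pow_of_tendsto_inv_pow_smul he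
  rw [norm_smul] at herr
  refine ⟨hgauge, norm_pos_iff.mpr (smul_sub_smul_ne_zero hindep hd1 _), ?_⟩
  have hlim : ‖d ⟨0, by omega⟩‖ * ‖(v ⟨0, by omega⟩ : Fin n → ℂ)‖ ≠ 0 :=
    mul_ne_zero (norm_ne_zero_iff.mpr hd1) (norm_ne_zero_iff.mpr (v.ne_zero _))
  refine (hgauge.div herr hlim).congr fun k => ?_
  exact div_div_div_cancel_right₀ (pow_ne_zero k (norm_ne_zero_iff.mpr hμ)) _ _
end
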